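/- arXiv:2005.01676 — 9 statements merged into one kernel-verified Lean document; each statement's English description precedes it below -/
import Mathlib

section
/- For every real number x, the formal power series identity A(t)·e^{xt} = ∑_{n=0}^∞ A_n^{(k)}(m,x)·t^n/n! holds in ℝ[[t]], where A(t) := ∑_{j=0}^∞ γ_j·((−1)^k m / k^k)^j · t^{kj}/j! and e^{xt} := ∑_{s=0}^∞ x^s t^s/s!. Equivalently, for every n ∈ ℕ, the coefficient of t^n in the product series A(t)·e^{xt} equals A_n^{(k)}(m,x)/n!. -/
/-!
Only the multiples `j = k i ≤ n` of `k` contribute to the Cauchy product, and they are indexed by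
`i ≤ n / k`; after dividing by `n!` the binomial-type factor `n! / (i! (n - k i)!)` of
`A_n^{(k)}(m, x)` splits into the `1 / i!` of `A(t)` and the `1 / (n - k i)!` of `e^{xt}`.
-/

open Finset

/-- Rising factorial (Pochhammer symbol) `x^(n) = x(x+1)⋯(x+n-1)`. -/
noncomputable def risingFact (x : ℝ) (n : ℕ) : ℝ := (ascPochhammer ℝ n).eval x

/-- `γ_i = (∏_r a_r^{(i)}) / (∏_s b_s^{(i)})`. -/
noncomputable def ghGamma {p q : ℕ} (a : Fin p → ℝ) (b : Fin q → ℝ) (i : ℕ) : ℝ :=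
  (∏ r, risingFact (a r) i) / (∏ s, risingFact (b s) i)

/-- The generalized hypergeometric Appell polynomial `A_n^{(k)}(m,x)` (as a function of `x`). -/
noncomputable def ghAppell {p q : ℕ} (a : Fin p → ℝ) (b : Fin q → ℝ)
    (k : ℕ) (m : ℝ) (n : ℕ) (x : ℝ) : ℝ :=
  ∑ i ∈ Finset.range (n / k + 1),
    ((n.factorial : ℝ) / (i.factorial * (n - k * i).factorial)) * ghGamma a b i *
      ((-1) ^ (k * i) * m ^ i / (k : ℝ) ^ (k * i)) * x ^ (n - k * i)

namespace PowerSeries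

variable {R : Type*} [CommSemiring R]

theorem coeff_mk_ite_dvd_mul (c : ℕ → R) (k n : ℕ) (φ : R⟦X⟧) :
    coeff n (mk (fun j => if k ∣ j then c (j / k) else 0) * φ) =
      ∑ i ∈ range (n / k + 1), c i * coeff (n - k * i) φ := by
  rcases Nat.eq_zero_or_pos k with rfl | hk
  · -- `0 ∣ j` only for `j = 0`, and `n / 0 = 0`
    simp [coeff_mul, Nat.sum_antidiagonal_eq_sum_range_succ_mk]
  rw [coeff_mul, Nat.sum_antidiagonal_eq_sum_range_succ_mk]
  simp only [coeff_mk, ite_mul, zero_mul]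
  rw [← sum_filter]
  refine (sum_nbij' (k * ·) (· / k) ?_ ?_ ?_ ?_ ?_).symm
  · intro i hi
    simp only [mem_filter, mem_range] at hi ⊢
    exact ⟨by nlinarith [Nat.div_mul_le_self n k, Nat.lt_succ_iff.mp hi], dvd_mul_right k i⟩
  · intro j hj
    simp only [mem_filter, mem_range] at hj ⊢
    exact Nat.lt_succ_of_le (Nat.div_le_div_right (Nat.lt_succ_iff.mp hj.1))
  · intro i _
    exact Nat.mul_div_cancel_left i hk
  · intro j hj
    exact Nat.mul_div_cancel' (mem_filter.mp hj).2
  · intro i _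
    simp only [Nat.mul_div_cancel_left i hk]

end PowerSeries

theorem ghAppell_div_factorial {p q : ℕ} (a : Fin p → ℝ) (b : Fin q → ℝ) (k : ℕ) (m x : ℝ)
    (n : ℕ) :
    ghAppell a b k m n x / n.factorial =
      ∑ i ∈ range (n / k + 1),
        ghGamma a b i * ((-1) ^ k * m / (k : ℝ) ^ k) ^ i / i.factorial *
          (x ^ (n - k * i) / (n - k * i).factorial) := by
  rw [ghAppell, sum_div]
  refine sum_congr rfl fun i _ => ?_
  rw [div_pow, mul_pow, ← pow_mul, ← pow_mul]
  have := n.factorial_ne_zero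
  have := i.factorial_ne_zero
  have := (n - k * i).factorial_ne_zero
  field_simp

theorem ghAppell_generating_function_general {p q : ℕ} (a : Fin p → ℝ) (b : Fin q → ℝ)
    (k : ℕ) (m : ℝ) (x : ℝ) (n : ℕ) :
    PowerSeries.coeff n
      ((PowerSeries.mk fun j : ℕ =>
          if k ∣ j then
            ghGamma a b (j / k) * (((-1) ^ k * m / (k : ℝ) ^ k) ^ (j / k)) / (j / k).factorial
          else 0) *
        (PowerSeries.mk fun s : ℕ => x ^ s / s.factorial)) =
      ghAppell a b k m n x / n.factorial := by
  rw [PowerSeries.coeff_mk_ite_dvd_mul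
      (fun i => ghGamma a b i * ((-1) ^ k * m / (k : ℝ) ^ k) ^ i / i.factorial),
    ghAppell_div_factorial]
  simp only [PowerSeries.coeff_mk]

/-- for every real `x`, the product of the formal power series
`A(t) = ∑_j γ_j ((-1)^k m / k^k)^j t^{kj}/j!` and `e^{xt} = ∑_s x^s t^s/s!` has,
for every `n`, `n`-th coefficient equal to `A_n^{(k)}(m,x)/n!`. -/
theorem ghAppell_generating_function {p q : ℕ} (a : Fin p → ℝ) (b : Fin q → ℝ)
    (hb : ∀ s : Fin q, ∀ j : ℕ, b s ≠ -(j : ℝ))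
    (k : ℕ) (hk : 1 ≤ k) (m : ℝ) (x : ℝ) (n : ℕ) :
    PowerSeries.coeff n
      ((PowerSeries.mk fun j : ℕ =>
          if k ∣ j then
            ghGamma a b (j / k) * (((-1) ^ k * m / (k : ℝ) ^ k) ^ (j / k)) / (j / k).factorial
          else 0) *
        (PowerSeries.mk fun s : ℕ => x ^ s / s.factorial)) =
      ghAppell a b k m n x / n.factorial :=
  ghAppell_generating_function_general a b k m x n
end

section
/- The generalized hypergeometric Appell polynomials form an Appell sequence: A_0^{(k)}(m,x) = 1 (in particular it is nonzero), and for every n ≥ 1 the derivative with respect to x satisfies (d/dx) A_n^{(k)}(m,x) = n · A_{n−1}^{(k)}(m,x). -/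
open Finset Polynomial

/-- The generalized hypergeometric Appell polynomial `A_n^{(k)}(m,X)` as a real polynomial. -/
noncomputable def ghAppellPoly {p q : ℕ} (a : Fin p → ℝ) (b : Fin q → ℝ)
    (k : ℕ) (m : ℝ) (n : ℕ) : Polynomial ℝ :=
  ∑ i ∈ Finset.range (n / k + 1),
    Polynomial.C (((n.factorial : ℝ) / (i.factorial * (n - k * i).factorial)) * ghGamma a b i *
      ((-1) ^ (k * i) * m ^ i / (k : ℝ) ^ (k * i))) * Polynomial.X ^ (n - k * i)

/-- the generalized hypergeometric Appell polynomials form an Appell sequence: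
`A_0 = 1` and `(A_n)' = n · A_{n-1}` for `n ≥ 1`. -/
theorem ghAppellPoly_appell_sequence {p q : ℕ} (a : Fin p → ℝ) (b : Fin q → ℝ)
    (hb : ∀ s : Fin q, ∀ j : ℕ, b s ≠ -(j : ℝ))
    (k : ℕ) (hk : 1 ≤ k) (m : ℝ) :
    ghAppellPoly a b k m 0 = 1 ∧
      ∀ n : ℕ, 1 ≤ n →
        Polynomial.derivative (ghAppellPoly a b k m n) =
          Polynomial.C (n : ℝ) * ghAppellPoly a b k m (n - 1) := by
  constructor
  · simp [ghAppellPoly, ghGamma, risingFact]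
  · intro n hn
    rw [ghAppellPoly, ghAppellPoly, derivative_sum, Finset.mul_sum]
    have hsub : Finset.range ((n - 1) / k + 1) ⊆ Finset.range (n / k + 1) :=
      Finset.range_subset_range.mpr (Nat.succ_le_succ (Nat.div_le_div_right (Nat.sub_le n 1)))
    rw [← Finset.sum_subset hsub (by
      intro i hi hni
      simp only [Finset.mem_range] at hi hni
      have h1 : (n - 1) / k < i := by omega
      have h2 : i ≤ n / k := by omega
      have hki : k * i = n := by
        have := (Nat.div_lt_iff_lt_mul (by omega : 0 < k)).mp h1
        have := Nat.le_div_iff_mul_le (by omega : 0 < k) |>.mp h2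
        have hcomm : i * k = k * i := Nat.mul_comm i k
        omega
      rw [hki]
      simp)]
    refine Finset.sum_congr rfl ?_
    intro i hi
    simp only [Finset.mem_range] at hi
    have hki : k * i ≤ n - 1 := by
      have : i ≤ (n - 1) / k := by omega
      have := Nat.le_div_iff_mul_le (by omega : 0 < k) |>.mp this
      have hcomm : i * k = k * i := Nat.mul_comm i k
      omega
    have he : 1 ≤ n - k * i := by omega
    rw [derivative_C_mul, derivative_X_pow]
    have hsub1 : n - k * i - 1 = n - 1 - k * i := by omega
    rw [hsub1, ← mul_assoc, ← mul_assoc, ← C_mul, ← C_mul]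
    congr 1
    congr 1
    obtain ⟨e, hee⟩ : ∃ e, n - k * i = e + 1 := ⟨n - k * i - 1, by omega⟩
    obtain ⟨n', rfl⟩ : ∃ n', n = n' + 1 := ⟨n - 1, by omega⟩
    have hee' : n' + 1 - 1 - k * i = e := by omega
    rw [hee, hee']
    have hf1 : ((n' + 1).factorial : ℝ) = (n' + 1) * n'.factorial := by
      rw [Nat.factorial_succ]; push_cast; ring
    have hf2 : ((e + 1).factorial : ℝ) = (e + 1) * e.factorial := by
      rw [Nat.factorial_succ]; push_cast; ring
    have h0 : (i.factorial : ℝ) ≠ 0 := Nat.cast_ne_zero.mpr i.factorial_ne_zero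
    have h1 : (e.factorial : ℝ) ≠ 0 := Nat.cast_ne_zero.mpr e.factorial_ne_zero
    have h2 : ((e : ℝ) + 1) ≠ 0 := by positivity
    simp only [Nat.add_sub_cancel]
    rw [hf1, hf2]
    push_cast
    field_simp
end

section
/- Let n ≥ k ≥ 1, let γ₁ = (∏_{r=1}^p a_r)/(∏_{s=1}^q b_s), and let Δ₁(k,−n) = ∏_{j=1}^k (−(n−j+1)/k). Let Ã_{n−k}^{(k)}(m,x) denote the generalized hypergeometric Appell polynomial of index n−k built from the shifted parameters a₁+1, …, a_p+1 and b₁+1, …, b_q+1 (i.e., with γ̃_i = (∏_{r=1}^p (a_r+1)^{(i)})/(∏_{s=1}^q (b_s+1)^{(i)}) in place of γ_i). Then for all real x: n·x·A_{n−1}^{(k)}(m,x) = n·A_n^{(k)}(m,x) − k·m·γ₁·Δ₁(k,−n)·Ã_{n−k}^{(k)}(m,x). (This is the paper's identity for the generalized hypergeometric function ₚ₊ₖF_q with parameter arrays Δ(k,−n+1), Δ(k,−n) and Δ(k,−n+k), after multiplying both sides by x.) -/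
open Finset

/-!
With the falling factorial `n^{\underline{j}} = n!/(n-j)!`, the identity
`n · (n-1)^{\underline{j}} = (n - j) · n^{\underline{j}}` gives term by term
`n·x·A_{n-1} = n·A_n - ∑ᵢ ki · (i-th term of A_n)`. Shifting `i = j + 1` in the last sum,
`γ_{j+1} = γ₁ γ̃_j` and `n^{\underline{k(j+1)}} = n^{\underline{k}} (n-k)^{\underline{kj}}` turn it
into `k m γ₁ ((-1)^k n^{\underline{k}} / k^k) Ã_{n-k}`, and `(-1)^k n^{\underline{k}} / k^k = Δ₁(k,-n)`.
-/

lemma Nat.mul_descFactorial_pred_add (n j : ℕ) :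
    n * (n - 1).descFactorial j + j * n.descFactorial j = n * n.descFactorial j := by
  cases n with
  | zero => cases j <;> simp
  | succ n =>
    rw [Nat.add_sub_cancel, ← Nat.succ_descFactorial, ← Nat.add_mul]
    rcases le_or_gt j (n + 1) with hj | hj
    · rw [Nat.sub_add_cancel hj]
    · simp [Nat.descFactorial_eq_zero_iff_lt.mpr hj]

lemma risingFact_succ_left (x : ℝ) (j : ℕ) :
    risingFact x (j + 1) = x * risingFact (x + 1) j := by
  simp [risingFact, ascPochhammer_succ_left, Polynomial.eval_comp]

lemma ghGamma_succ {p q : ℕ} (a : Fin p → ℝ) (b : Fin q → ℝ) (j : ℕ) :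
    ghGamma a b (j + 1) =
      (∏ r, a r) / (∏ s, b s) * ghGamma (fun r => a r + 1) (fun s => b s + 1) j := by
  unfold ghGamma
  rw [div_mul_div_comm]
  congr 1 <;> rw [← prod_mul_distrib] <;>
    exact prod_congr rfl fun r _ => risingFact_succ_left _ _

noncomputable def ghCoeff {p q : ℕ} (a : Fin p → ℝ) (b : Fin q → ℝ) (k : ℕ) (m : ℝ)
    (i : ℕ) : ℝ :=
  ghGamma a b i * ((-1) ^ (k * i) * m ^ i / (k : ℝ) ^ (k * i))

lemma ghCoeff_succ {p q : ℕ} (a : Fin p → ℝ) (b : Fin q → ℝ) (k : ℕ) (m : ℝ) (j : ℕ) :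
    ghCoeff a b k m (j + 1) =
      (∏ r, a r) / (∏ s, b s) * ((-1) ^ k * m / (k : ℝ) ^ k) *
        ghCoeff (fun r => a r + 1) (fun s => b s + 1) k m j := by
  rw [ghCoeff, ghCoeff, ghGamma_succ, Nat.mul_succ]
  ring

section AppellTerm

variable (k : ℕ) (c : ℕ → ℝ) (n : ℕ) (x : ℝ)

/-- `n!/(n-ki)!` is written as a falling factorial so that the term vanishes once `ki > n`, and the
sums below may run over any range containing `0, …, n / k`. -/
noncomputable def appellTerm (i : ℕ) : ℝ :=
  n.descFactorial (k * i) / i.factorial * c i * x ^ (n - k * i)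

lemma appellTerm_eq_zero_of_lt {i : ℕ} (h : n < k * i) : appellTerm k c n x i = 0 := by
  simp [appellTerm, Nat.descFactorial_eq_zero_iff_lt.mpr h]

lemma ghAppell_eq_sum_appellTerm {p q : ℕ} (a : Fin p → ℝ) (b : Fin q → ℝ) (m : ℝ)
    (hk : 1 ≤ k) {N : ℕ} (hN : n / k < N) :
    ghAppell a b k m n x = ∑ i ∈ range N, appellTerm k (ghCoeff a b k m) n x i := by
  rw [ghAppell, ← sum_subset (range_subset_range.mpr hN)]
  · refine sum_congr rfl fun i hi => ?_
    have hki : k * i ≤ n := by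
      rw [mul_comm, ← Nat.le_div_iff_mul_le hk]
      exact Nat.lt_succ_iff.mp (mem_range.mp hi)
    have hfac : (n.factorial : ℝ) = (n - k * i).factorial * n.descFactorial (k * i) := by
      exact_mod_cast (Nat.factorial_mul_descFactorial hki).symm
    rw [appellTerm, ghCoeff, hfac]
    field_simp
  · intro i _ hi
    refine appellTerm_eq_zero_of_lt k _ n x ?_
    rw [mul_comm, ← Nat.div_lt_iff_lt_mul hk]
    simpa using hi

lemma natCast_mul_appellTerm_pred (i : ℕ) :
    n * x * appellTerm k c (n - 1) x i + (k * i : ℕ) * appellTerm k c n x i =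
      n * appellTerm k c n x i := by
  have key : (n : ℝ) * (n - 1).descFactorial (k * i) + (k * i : ℕ) * n.descFactorial (k * i) =
      n * n.descFactorial (k * i) := by
    exact_mod_cast Nat.mul_descFactorial_pred_add n (k * i)
  unfold appellTerm
  rcases lt_or_ge (k * i) n with hlt | hge
  · rw [show n - k * i = n - 1 - k * i + 1 by omega, pow_succ]
    linear_combination (c i / i.factorial * x ^ (n - 1 - k * i) * x) * key
  · have hzero : (n : ℝ) * (n - 1).descFactorial (k * i) = 0 := by
      rcases Nat.eq_zero_or_pos n with rfl | hpos
      · simp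
      · simp [Nat.descFactorial_eq_zero_iff_lt.mpr (show n - 1 < k * i by omega)]
    linear_combination (c i / i.factorial * x ^ (n - k * i)) * key +
      (c i / i.factorial * (x * x ^ (n - 1 - k * i) - x ^ (n - k * i))) * hzero

lemma mul_appellTerm_succ {c' : ℕ → ℝ} {C : ℝ} (hc : ∀ j, c (j + 1) = C * c' j) (j : ℕ) :
    (k * (j + 1) : ℕ) * appellTerm k c n x (j + 1) =
      k * C * n.descFactorial k * appellTerm k c' (n - k) x j := by
  have hdesc : (n.descFactorial (k * (j + 1)) : ℝ) =
      (n - k).descFactorial (k * j) * n.descFactorial k := by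
    rw [← Nat.descFactorial_mul_descFactorial (Nat.le_mul_of_pos_right k j.succ_pos),
      Nat.mul_succ, Nat.add_sub_cancel, Nat.cast_mul]
  rw [appellTerm, appellTerm, hc, hdesc, Nat.factorial_succ,
    show n - k * (j + 1) = n - k - k * j by rw [Nat.mul_succ]; omega]
  push_cast
  field_simp

lemma sum_appellTerm_pred (N : ℕ) :
    n * x * ∑ i ∈ range N, appellTerm k c (n - 1) x i =
      n * ∑ i ∈ range N, appellTerm k c n x i -
        ∑ i ∈ range N, (k * i : ℕ) * appellTerm k c n x i := by
  rw [mul_sum, mul_sum, eq_sub_iff_add_eq, ← sum_add_distrib]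
  exact sum_congr rfl fun i _ => natCast_mul_appellTerm_pred k c n x i

lemma sum_mul_appellTerm {c' : ℕ → ℝ} {C : ℝ} (hc : ∀ j, c (j + 1) = C * c' j) (N : ℕ) :
    ∑ i ∈ range (N + 1), (k * i : ℕ) * appellTerm k c n x i =
      k * C * n.descFactorial k * ∑ j ∈ range N, appellTerm k c' (n - k) x j := by
  rw [sum_range_succ', mul_sum, Nat.mul_zero, Nat.cast_zero, zero_mul, add_zero]
  exact sum_congr rfl fun j _ => mul_appellTerm_succ k c n x hc j

end AppellTerm

lemma prod_range_neg_natCast_sub_div (n k : ℕ) :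
    ∏ j ∈ range k, (-((n : ℝ) - j) / k) = (-1) ^ k * n.descFactorial k / (k : ℝ) ^ k := by
  rw [prod_div_distrib, prod_neg, ← descPochhammer_eval_eq_prod_range,
    descPochhammer_eval_eq_descFactorial, prod_const, card_range]

theorem ghAppell_derivative_identity_general {p q : ℕ} (a : Fin p → ℝ) (b : Fin q → ℝ)
    (k : ℕ) (hk : 1 ≤ k) (m : ℝ) (n : ℕ) (x : ℝ) :
    (n : ℝ) * x * ghAppell a b k m (n - 1) x =
      (n : ℝ) * ghAppell a b k m n x -
        (k : ℝ) * m * ((∏ r, a r) / (∏ s, b s)) *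
          (∏ j ∈ Finset.range k, (-(((n : ℝ) - j)) / (k : ℝ))) *
          ghAppell (fun r => a r + 1) (fun s => b s + 1) k m (n - k) x := by
  have hdiv : ∀ l ≤ n, l / k < n + 1 := fun l hl =>
    Nat.lt_succ_of_le ((Nat.div_le_self l k).trans hl)
  rw [ghAppell_eq_sum_appellTerm k (n - 1) x a b m hk
      (Nat.lt_succ_of_lt (hdiv _ (Nat.sub_le n 1))),
    ghAppell_eq_sum_appellTerm k n x a b m hk (Nat.lt_succ_of_lt (hdiv n le_rfl)),
    ghAppell_eq_sum_appellTerm k (n - k) x _ _ m hk (hdiv _ (Nat.sub_le n k)),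
    sum_appellTerm_pred, sum_mul_appellTerm k _ n x (ghCoeff_succ a b k m),
    prod_range_neg_natCast_sub_div]
  ring

/-- for `n ≥ k ≥ 1`,
`n·x·A_{n-1}^{(k)}(m,x) = n·A_n^{(k)}(m,x) − k·m·γ₁·Δ₁(k,−n)·Ã_{n-k}^{(k)}(m,x)`,
where `γ₁ = (∏ a_r)/(∏ b_s)`, `Δ₁(k,−n) = ∏_{j=1}^k (−(n−j+1)/k)` and `Ã` is built from
the shifted parameters `a_r + 1`, `b_s + 1`. -/
theorem ghAppell_derivative_identity {p q : ℕ} (a : Fin p → ℝ) (b : Fin q → ℝ)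
    (hb : ∀ s : Fin q, ∀ j : ℕ, b s ≠ -(j : ℝ))
    (k : ℕ) (hk : 1 ≤ k) (m : ℝ) (n : ℕ) (hn : k ≤ n) (x : ℝ) :
    (n : ℝ) * x * ghAppell a b k m (n - 1) x =
      (n : ℝ) * ghAppell a b k m n x -
        (k : ℝ) * m * ((∏ r, a r) / (∏ s, b s)) *
          (∏ j ∈ Finset.range k, (-(((n : ℝ) - j)) / (k : ℝ))) *
          ghAppell (fun r => a r + 1) (fun s => b s + 1) k m (n - k) x :=
  ghAppell_derivative_identity_general a b k hk m n x
end

section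
/- Symmetry: if k is even, then for every n ∈ ℕ and every real x, A_n^{(k)}(m, −x) = (−1)^n · A_n^{(k)}(m, x); in particular A_{2n}^{(2k')}(m,−x) = A_{2n}^{(2k')}(m,x) and A_{2n+1}^{(2k')}(m,−x) = −A_{2n+1}^{(2k')}(m,x) for every k' ≥ 1. -/
open Finset

/-- if `k` is even then `A_n^{(k)}(m,−x) = (−1)^n A_n^{(k)}(m,x)`; in particular
`A_{2n}^{(2k')}(m,−x) = A_{2n}^{(2k')}(m,x)` and `A_{2n+1}^{(2k')}(m,−x) = −A_{2n+1}^{(2k')}(m,x)`. -/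
theorem ghAppell_symmetry {p q : ℕ} (a : Fin p → ℝ) (b : Fin q → ℝ)
    (hb : ∀ s : Fin q, ∀ j : ℕ, b s ≠ -(j : ℝ)) (m : ℝ) :
    (∀ k : ℕ, 1 ≤ k → Even k → ∀ (n : ℕ) (x : ℝ),
        ghAppell a b k m n (-x) = (-1) ^ n * ghAppell a b k m n x) ∧
      (∀ k' : ℕ, 1 ≤ k' → ∀ (n : ℕ) (x : ℝ),
        ghAppell a b (2 * k') m (2 * n) (-x) = ghAppell a b (2 * k') m (2 * n) x ∧
          ghAppell a b (2 * k') m (2 * n + 1) (-x) =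
            -ghAppell a b (2 * k') m (2 * n + 1) x) := by
  have main : ∀ k : ℕ, 1 ≤ k → Even k → ∀ (n : ℕ) (x : ℝ),
      ghAppell a b k m n (-x) = (-1) ^ n * ghAppell a b k m n x := by
    intro k hk hke n x
    unfold ghAppell
    rw [Finset.mul_sum]
    refine Finset.sum_congr rfl fun i hi => ?_
    have hle : i ≤ n / k := Nat.lt_succ_iff.mp (Finset.mem_range.mp hi)
    have hki : k * i ≤ n :=
      le_trans (Nat.mul_le_mul_left k hle) (Nat.mul_div_le n k)
    have heki : Even (k * i) := hke.mul_right i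
    have hpow : (-x) ^ (n - k * i) = (-1 : ℝ) ^ n * x ^ (n - k * i) := by
      rw [neg_pow]
      congr 1
      rcases Nat.even_or_odd n with hn | hn
      · rw [hn.neg_one_pow, Even.neg_one_pow ((Nat.even_sub hki).mpr (by simp [hn, heki]))]
      · rw [hn.neg_one_pow, Odd.neg_one_pow]
        rcases Nat.even_or_odd (n - k * i) with h | h
        · exact absurd ((Nat.even_sub hki).mp h |>.mpr heki) (Nat.not_even_iff_odd.mpr hn)
        · exact h
    rw [hpow]; ring
  refine ⟨main, fun k' hk' n x => ?_⟩
  have hke : Even (2 * k') := even_two_mul k'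
  have hk1 : 1 ≤ 2 * k' := le_trans hk' (Nat.le_mul_of_pos_left k' (by norm_num))
  constructor
  · rw [main _ hk1 hke]; simp [pow_mul]
  · rw [main _ hk1 hke]; rw [pow_succ, pow_mul]; simp
end

section
/- Addition formula: for all n ∈ ℕ and all real x, y, A_n^{(k)}(m, x + y) = ∑_{i=0}^{n} C(n,i) · y^{n−i} · A_i^{(k)}(m, x) = ∑_{i=0}^{n} C(n,i) · x^{n−i} · A_i^{(k)}(m, y), where C(n,i) denotes the binomial coefficient. -/
open Finset

lemma ghAppell_add_aux {p q : ℕ} (a : Fin p → ℝ) (b : Fin q → ℝ)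
    (k : ℕ) (hk : 1 ≤ k) (m : ℝ) (n : ℕ) (x y : ℝ) :
    ghAppell a b k m n (x + y) =
      ∑ i ∈ Finset.range (n + 1), (n.choose i : ℝ) * y ^ (n - i) * ghAppell a b k m i x := by
  have hk' : 0 < k := hk
  unfold ghAppell
  simp_rw [add_pow, Finset.mul_sum]
  rw [Finset.sum_sigma', Finset.sum_sigma']
  refine Finset.sum_nbij' (fun z => ⟨k * z.1 + z.2, z.1⟩) (fun z => ⟨z.2, z.1 - k * z.2⟩)
    ?_ ?_ ?_ ?_ ?_
  · rintro ⟨j, r⟩ hz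
    simp only [Finset.mem_sigma, Finset.mem_range, Nat.lt_succ_iff] at hz ⊢
    obtain ⟨hj, hr⟩ := hz
    have hkj : k * j ≤ n := by
      rw [mul_comm]; exact (Nat.le_div_iff_mul_le hk').mp hj
    refine ⟨by omega, ?_⟩
    rw [Nat.le_div_iff_mul_le hk', mul_comm]; omega
  · rintro ⟨i, j⟩ hz
    simp only [Finset.mem_sigma, Finset.mem_range, Nat.lt_succ_iff] at hz ⊢
    obtain ⟨hi, hj⟩ := hz
    have hkj : k * j ≤ i := by
      rw [mul_comm]; exact (Nat.le_div_iff_mul_le hk').mp hj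
    have hkn : k * j ≤ n := hkj.trans hi
    refine ⟨?_, by omega⟩
    rw [Nat.le_div_iff_mul_le hk', mul_comm]; omega
  · rintro ⟨j, r⟩ hz
    simp
  · rintro ⟨i, j⟩ hz
    simp only [Finset.mem_sigma, Finset.mem_range, Nat.lt_succ_iff] at hz
    obtain ⟨hi, hj⟩ := hz
    have hkj : k * j ≤ i := by
      rw [mul_comm]; exact (Nat.le_div_iff_mul_le hk').mp hj
    simp [Nat.add_sub_cancel' hkj]
  · rintro ⟨j, r⟩ hz
    simp only [Finset.mem_sigma, Finset.mem_range, Nat.lt_succ_iff] at hz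
    obtain ⟨hj, hr⟩ := hz
    have hkj : k * j ≤ n := by
      rw [mul_comm]; exact (Nat.le_div_iff_mul_le hk').mp hj
    dsimp only
    have e1 : k * j + r - k * j = r := by omega
    have e2 : n - (k * j + r) = n - k * j - r := by omega
    rw [e1, e2]
    have hc1 : ((n - k * j).choose r : ℝ)
        = ((n - k * j).factorial : ℝ) / (r.factorial * (n - k * j - r).factorial) :=
      Nat.cast_choose ℝ hr
    have hc2 : (n.choose (k * j + r) : ℝ)
        = (n.factorial : ℝ) / ((k * j + r).factorial * (n - k * j - r).factorial) := by
      rw [Nat.cast_choose ℝ (by omega : k * j + r ≤ n), e2]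
    rw [hc1, hc2]
    have f0 : ∀ l : ℕ, (l.factorial : ℝ) ≠ 0 := fun l => Nat.cast_ne_zero.mpr l.factorial_ne_zero
    have hnkj : ((n - k * j).factorial : ℝ) ≠ 0 := f0 _
    field_simp

/-- addition formula
`A_n^{(k)}(m,x+y) = ∑_i C(n,i) y^{n−i} A_i^{(k)}(m,x) = ∑_i C(n,i) x^{n−i} A_i^{(k)}(m,y)`. -/
theorem ghAppell_addition {p q : ℕ} (a : Fin p → ℝ) (b : Fin q → ℝ)
    (hb : ∀ s : Fin q, ∀ j : ℕ, b s ≠ -(j : ℝ))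
    (k : ℕ) (hk : 1 ≤ k) (m : ℝ) (n : ℕ) (x y : ℝ) :
    ghAppell a b k m n (x + y) =
        ∑ i ∈ Finset.range (n + 1), (n.choose i : ℝ) * y ^ (n - i) * ghAppell a b k m i x ∧
      ghAppell a b k m n (x + y) =
        ∑ i ∈ Finset.range (n + 1), (n.choose i : ℝ) * x ^ (n - i) * ghAppell a b k m i y := by
  exact ⟨ghAppell_add_aux a b k hk m n x y,
    by rw [add_comm x y]; exact ghAppell_add_aux a b k hk m n y x⟩
end

section
/- Multiplication formula: for all n ∈ ℕ, every real M, and every real x, A_n^{(k)}(m, M·x) = ∑_{i=0}^{n} C(n,i) · (M−1)^{n−i} · x^{n−i} · A_i^{(k)}(m, x), where C(n,i) denotes the binomial coefficient. -/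
open Finset

/-- multiplication formula
`A_n^{(k)}(m,Mx) = ∑_i C(n,i) (M−1)^{n−i} x^{n−i} A_i^{(k)}(m,x)`. -/
theorem ghAppell_multiplication {p q : ℕ} (a : Fin p → ℝ) (b : Fin q → ℝ)
    (hb : ∀ s : Fin q, ∀ j : ℕ, b s ≠ -(j : ℝ))
    (k : ℕ) (hk : 1 ≤ k) (m : ℝ) (n : ℕ) (M x : ℝ) :
    ghAppell a b k m n (M * x) =
      ∑ i ∈ Finset.range (n + 1),
        (n.choose i : ℝ) * (M - 1) ^ (n - i) * x ^ (n - i) * ghAppell a b k m i x := by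
  unfold ghAppell
  have hMx : ∀ e : ℕ, (M * x) ^ e =
      ∑ j ∈ Finset.range (e + 1), ((M - 1) * x) ^ j * x ^ (e - j) * (e.choose j : ℝ) := by
    intro e
    rw [show M * x = (M - 1) * x + x by ring, add_pow]
  simp_rw [hMx, Finset.mul_sum]
  rw [Finset.sum_sigma', Finset.sum_sigma']
  refine Finset.sum_nbij' (fun t => ⟨n - t.2, t.1⟩) (fun t => ⟨t.2, n - t.1⟩) ?_ ?_ ?_ ?_ ?_
  · rintro ⟨i, j⟩ h
    simp only [Finset.mem_sigma, Finset.mem_range, Nat.lt_succ_iff,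
      Nat.le_div_iff_mul_le hk, mul_comm] at h ⊢
    omega
  · rintro ⟨i, j⟩ h
    simp only [Finset.mem_sigma, Finset.mem_range, Nat.lt_succ_iff,
      Nat.le_div_iff_mul_le hk, mul_comm] at h ⊢
    omega
  · rintro ⟨i, j⟩ h
    simp only [Finset.mem_sigma, Finset.mem_range, Nat.lt_succ_iff,
      Nat.le_div_iff_mul_le hk] at h
    have hj : j ≤ n := le_trans h.2 (Nat.sub_le _ _)
    simp only [Sigma.mk.inj_iff, heq_eq_eq]
    exact ⟨trivial, by omega⟩
  · rintro ⟨i, j⟩ h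
    simp only [Finset.mem_sigma, Finset.mem_range, Nat.lt_succ_iff,
      Nat.le_div_iff_mul_le hk] at h
    have hi : i ≤ n := h.1
    simp only [Sigma.mk.inj_iff, heq_eq_eq]
    exact ⟨by omega, trivial⟩
  · rintro ⟨i, j⟩ h
    simp only [Finset.mem_sigma, Finset.mem_range, Nat.lt_succ_iff,
      Nat.le_div_iff_mul_le hk] at h
    obtain ⟨hi, hj⟩ := h
    have hki : k * i ≤ n := by rw [mul_comm]; exact hi
    dsimp only
    rw [Nat.cast_choose ℝ (show j ≤ n - k * i from hj),
        Nat.cast_choose ℝ (show n - j ≤ n by omega),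
        show n - (n - j) = j by omega,
        show n - j - k * i = n - k * i - j by omega, mul_pow]
    have f0 : ∀ r : ℕ, (r.factorial : ℝ) ≠ 0 := fun r => Nat.cast_ne_zero.mpr r.factorial_ne_zero
    set g := ghGamma a b i
    set c := ((-1 : ℝ) ^ (k * i) * m ^ i / (k : ℝ) ^ (k * i))
    have e1 := f0 i
    have e2 := f0 j
    have e3 := f0 (n - j)
    have e4 := f0 (n - k * i)
    have e5 := f0 (n - k * i - j)
    field_simp
end

section
/- Indexes interchange formula: for all integers k₁, k₂ ≥ 1, all n ∈ ℕ, and all real x, y, ∑_{i=0}^{n} C(n,i) · A_i^{(k₁)}(m,x) · A_{n−i}^{(k₂)}(m,y) = ∑_{i=0}^{n} C(n,i) · A_i^{(k₂)}(m,x) · A_{n−i}^{(k₁)}(m,y), where both families are built from the same parameters a₁,…,a_p, b₁,…,b_q and m, and C(n,i) denotes the binomial coefficient. -/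
open Finset

/-- Extend the defining sum of an Appell-type polynomial with `if`-guards. -/
lemma ghAux_sum_guard (g : ℕ → ℝ) (k n N : ℕ) (hk : 0 < k) (hn : n ≤ N) (x : ℝ) :
    ∑ i ∈ Finset.range (n / k + 1),
        ((n.factorial : ℝ) / (i.factorial * (n - k * i).factorial)) * g i * x ^ (n - k * i)
    = ∑ i ∈ Finset.range (N + 1),
        if k * i ≤ n then
          ((n.factorial : ℝ) / (i.factorial * (n - k * i).factorial)) * g i * x ^ (n - k * i)
        else 0 := by
  have hsub : Finset.range (n / k + 1) ⊆ Finset.range (N + 1) := by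
    intro t ht
    simp only [Finset.mem_range] at ht ⊢
    have := Nat.div_le_self n k
    omega
  rw [Finset.sum_congr rfl (g := fun i => if k * i ≤ n then
      ((n.factorial : ℝ) / (i.factorial * (n - k * i).factorial)) * g i * x ^ (n - k * i)
      else 0) ?_]
  · refine Finset.sum_subset hsub ?_
    intro i hi hni
    simp only [Finset.mem_range, Nat.lt_succ_iff] at hni
    have : ¬ k * i ≤ n := by
      intro hki
      refine hni ((Nat.le_div_iff_mul_le hk).2 ?_)
      rwa [Nat.mul_comm]
    simp [this]
  · intro i hi
    simp only [Finset.mem_range, Nat.lt_succ_iff] at hi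
    have h' := (Nat.le_div_iff_mul_le hk).1 hi
    have : k * i ≤ n := by rwa [Nat.mul_comm] at h'
    simp [this]

/-- Vandermonde-type inner convolution. -/
lemma ghAux_inner (g₁ g₂ : ℝ) (fi fj : ℝ) (hfi : fi ≠ 0) (hfj : fj ≠ 0) (A B n : ℕ)
    (x y : ℝ) :
    ∑ s ∈ Finset.range (n + 1), (n.choose s : ℝ) *
        ((if A ≤ s then ((s.factorial : ℝ) / (fi * (s - A).factorial)) * g₁ * x ^ (s - A) else 0) *
         (if B ≤ n - s then
            (((n - s).factorial : ℝ) / (fj * ((n - s) - B).factorial)) * g₂ * y ^ ((n - s) - B)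
          else 0))
    = if A + B ≤ n then
        ((n.factorial : ℝ) / (fi * fj * (n - (A + B)).factorial)) * g₁ * g₂ *
          (x + y) ^ (n - (A + B))
      else 0 := by
  by_cases hAB : A + B ≤ n
  · simp only [hAB, if_true]
    set M := n - (A + B) with hM
    have hsub : Finset.Ico A (n - B + 1) ⊆ Finset.range (n + 1) := by
      intro s hs
      simp only [Finset.mem_Ico, Finset.mem_range] at hs ⊢
      omega
    have hvan : ∀ s ∈ Finset.range (n + 1), s ∉ Finset.Ico A (n - B + 1) →
        (n.choose s : ℝ) *
        ((if A ≤ s then ((s.factorial : ℝ) / (fi * (s - A).factorial)) * g₁ * x ^ (s - A) else 0) *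
         (if B ≤ n - s then
            (((n - s).factorial : ℝ) / (fj * ((n - s) - B).factorial)) * g₂ * y ^ ((n - s) - B)
          else 0)) = 0 := by
      intro s hs hns
      simp only [Finset.mem_range, Nat.lt_succ_iff] at hs
      simp only [Finset.mem_Ico, not_and, not_lt] at hns
      rcases Classical.em (A ≤ s) with h1 | h1
      · have h2 : ¬ B ≤ n - s := by
          have := hns h1
          omega
        simp [h2]
      · simp [h1]
    rw [← Finset.sum_subset hsub hvan]
    have hdrop : ∀ s ∈ Finset.Ico A (n - B + 1), (n.choose s : ℝ) *
        ((if A ≤ s then ((s.factorial : ℝ) / (fi * (s - A).factorial)) * g₁ * x ^ (s - A) else 0) *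
         (if B ≤ n - s then
            (((n - s).factorial : ℝ) / (fj * ((n - s) - B).factorial)) * g₂ * y ^ ((n - s) - B)
          else 0))
        = (n.choose s : ℝ) *
            ((((s.factorial : ℝ) / (fi * (s - A).factorial)) * g₁ * x ^ (s - A)) *
             ((((n - s).factorial : ℝ) / (fj * ((n - s) - B).factorial)) * g₂ *
                y ^ ((n - s) - B))) := by
      intro s hs
      simp only [Finset.mem_Ico] at hs
      have h1 : A ≤ s := hs.1
      have h2 : B ≤ n - s := by omega
      simp [h1, h2]
    rw [Finset.sum_congr rfl hdrop, Finset.sum_Ico_eq_sum_range]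
    have hMrange : n - B + 1 - A = M + 1 := by omega
    rw [hMrange]
    have h2 : ∀ u ∈ Finset.range (M + 1),
        (n.choose (A + u) : ℝ) *
          (((((A + u).factorial : ℝ) / (fi * ((A + u) - A).factorial)) * g₁ * x ^ ((A + u) - A)) *
           ((((n - (A + u)).factorial : ℝ) / (fj * ((n - (A + u)) - B).factorial)) * g₂ *
              y ^ ((n - (A + u)) - B)))
        = ((n.factorial : ℝ) / (fi * fj * (M.factorial))) * g₁ * g₂ *
            (x ^ u * y ^ (M - u) * (M.choose u : ℝ)) := by
      intro u hu
      simp only [Finset.mem_range, Nat.lt_succ_iff] at hu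
      have e1 : A + u - A = u := by omega
      have e2 : (n - (A + u)) - B = M - u := by omega
      have e3 : A + u ≤ n := by omega
      rw [e1, e2, Nat.cast_choose ℝ e3, Nat.cast_choose ℝ hu]
      have hfa : ((A + u).factorial : ℝ) ≠ 0 := Nat.cast_ne_zero.2 (Nat.factorial_ne_zero _)
      have hfb : ((n - (A + u)).factorial : ℝ) ≠ 0 := Nat.cast_ne_zero.2 (Nat.factorial_ne_zero _)
      have hfu : (u.factorial : ℝ) ≠ 0 := Nat.cast_ne_zero.2 (Nat.factorial_ne_zero _)
      have hfMu : ((M - u).factorial : ℝ) ≠ 0 := Nat.cast_ne_zero.2 (Nat.factorial_ne_zero _)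
      have hfM : ((M).factorial : ℝ) ≠ 0 := Nat.cast_ne_zero.2 (Nat.factorial_ne_zero _)
      field_simp
    rw [Finset.sum_congr rfl h2, ← Finset.mul_sum, ← add_pow]
  · simp only [hAB, if_false]
    refine Finset.sum_eq_zero ?_
    intro s hs
    simp only [Finset.mem_range, Nat.lt_succ_iff] at hs
    rcases Classical.em (A ≤ s) with h1 | h1
    · have h2 : ¬ B ≤ n - s := by omega
      simp [h2]
    · simp [h1]

/-- Key convolution identity. -/
lemma ghAux_key (g₁ g₂ : ℕ → ℝ) (k₁ k₂ n : ℕ) (hk₁ : 0 < k₁) (hk₂ : 0 < k₂) (x y : ℝ) :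
    ∑ s ∈ Finset.range (n + 1), (n.choose s : ℝ) *
        (∑ i ∈ Finset.range (s / k₁ + 1),
          ((s.factorial : ℝ) / (i.factorial * (s - k₁ * i).factorial)) * g₁ i *
            x ^ (s - k₁ * i)) *
        (∑ j ∈ Finset.range ((n - s) / k₂ + 1),
          (((n - s).factorial : ℝ) / (j.factorial * ((n - s) - k₂ * j).factorial)) * g₂ j *
            y ^ ((n - s) - k₂ * j))
    = ∑ i ∈ Finset.range (n + 1), ∑ j ∈ Finset.range (n + 1),
        if k₁ * i + k₂ * j ≤ n then
          ((n.factorial : ℝ) / (i.factorial * j.factorial * (n - (k₁ * i + k₂ * j)).factorial)) *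
            g₁ i * g₂ j * (x + y) ^ (n - (k₁ * i + k₂ * j))
        else 0 := by
  have step1 : ∀ s ∈ Finset.range (n + 1), (n.choose s : ℝ) *
        (∑ i ∈ Finset.range (s / k₁ + 1),
          ((s.factorial : ℝ) / (i.factorial * (s - k₁ * i).factorial)) * g₁ i *
            x ^ (s - k₁ * i)) *
        (∑ j ∈ Finset.range ((n - s) / k₂ + 1),
          (((n - s).factorial : ℝ) / (j.factorial * ((n - s) - k₂ * j).factorial)) * g₂ j *
            y ^ ((n - s) - k₂ * j))
      = ∑ i ∈ Finset.range (n + 1), ∑ j ∈ Finset.range (n + 1), (n.choose s : ℝ) *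
          ((if k₁ * i ≤ s then
              ((s.factorial : ℝ) / ((i.factorial : ℝ) * (s - k₁ * i).factorial)) * g₁ i *
                x ^ (s - k₁ * i)
            else 0) *
           (if k₂ * j ≤ n - s then
              (((n - s).factorial : ℝ) / ((j.factorial : ℝ) * ((n - s) - k₂ * j).factorial)) *
                g₂ j * y ^ ((n - s) - k₂ * j)
            else 0)) := by
    intro s hs
    simp only [Finset.mem_range, Nat.lt_succ_iff] at hs
    rw [ghAux_sum_guard g₁ k₁ s n hk₁ hs x, ghAux_sum_guard g₂ k₂ (n - s) n hk₂ (by omega) y]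
    rw [mul_assoc, Finset.sum_mul_sum, Finset.mul_sum]
    exact Finset.sum_congr rfl fun i _ => Finset.mul_sum _ _ _
  rw [Finset.sum_congr rfl step1]
  rw [Finset.sum_comm]
  refine Finset.sum_congr rfl ?_
  intro i _
  rw [Finset.sum_comm]
  refine Finset.sum_congr rfl ?_
  intro j _
  exact ghAux_inner (g₁ i) (g₂ j) (i.factorial : ℝ) (j.factorial : ℝ)
    (Nat.cast_ne_zero.2 (Nat.factorial_ne_zero _)) (Nat.cast_ne_zero.2 (Nat.factorial_ne_zero _))
    (k₁ * i) (k₂ * j) n x y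

/-- Rewriting `ghAppell` so the coefficient is a function of the index only. -/
lemma ghAppell_eq_aux {p q : ℕ} (a : Fin p → ℝ) (b : Fin q → ℝ) (k : ℕ) (m : ℝ) (n : ℕ)
    (x : ℝ) :
    ghAppell a b k m n x = ∑ i ∈ Finset.range (n / k + 1),
      ((n.factorial : ℝ) / (i.factorial * (n - k * i).factorial)) *
        (ghGamma a b i * ((-1) ^ (k * i) * m ^ i / (k : ℝ) ^ (k * i))) * x ^ (n - k * i) := by
  unfold ghAppell
  refine Finset.sum_congr rfl ?_
  intro i _
  ring

/-- indexes interchange formula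
`∑_i C(n,i) A_i^{(k₁)}(m,x) A_{n−i}^{(k₂)}(m,y) = ∑_i C(n,i) A_i^{(k₂)}(m,x) A_{n−i}^{(k₁)}(m,y)`. -/
theorem ghAppell_indexes_interchange {p q : ℕ} (a : Fin p → ℝ) (b : Fin q → ℝ)
    (hb : ∀ s : Fin q, ∀ j : ℕ, b s ≠ -(j : ℝ))
    (k₁ k₂ : ℕ) (hk₁ : 1 ≤ k₁) (hk₂ : 1 ≤ k₂) (m : ℝ) (n : ℕ) (x y : ℝ) :
    ∑ i ∈ Finset.range (n + 1),
        (n.choose i : ℝ) * ghAppell a b k₁ m i x * ghAppell a b k₂ m (n - i) y =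
      ∑ i ∈ Finset.range (n + 1),
        (n.choose i : ℝ) * ghAppell a b k₂ m i x * ghAppell a b k₁ m (n - i) y := by
  set G₁ : ℕ → ℝ := fun i => ghGamma a b i * ((-1) ^ (k₁ * i) * m ^ i / (k₁ : ℝ) ^ (k₁ * i))
    with hG₁
  set G₂ : ℕ → ℝ := fun i => ghGamma a b i * ((-1) ^ (k₂ * i) * m ^ i / (k₂ : ℝ) ^ (k₂ * i))
    with hG₂
  have hL : ∀ s x', ghAppell a b k₁ m s x' = ∑ i ∈ Finset.range (s / k₁ + 1),
      ((s.factorial : ℝ) / (i.factorial * (s - k₁ * i).factorial)) * G₁ i *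
        x' ^ (s - k₁ * i) := fun s x' => ghAppell_eq_aux a b k₁ m s x'
  have hR : ∀ s x', ghAppell a b k₂ m s x' = ∑ i ∈ Finset.range (s / k₂ + 1),
      ((s.factorial : ℝ) / (i.factorial * (s - k₂ * i).factorial)) * G₂ i *
        x' ^ (s - k₂ * i) := fun s x' => ghAppell_eq_aux a b k₂ m s x'
  calc ∑ i ∈ Finset.range (n + 1),
        (n.choose i : ℝ) * ghAppell a b k₁ m i x * ghAppell a b k₂ m (n - i) y
      = ∑ i ∈ Finset.range (n + 1), ∑ j ∈ Finset.range (n + 1),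
          if k₁ * i + k₂ * j ≤ n then
            ((n.factorial : ℝ) /
                (i.factorial * j.factorial * (n - (k₁ * i + k₂ * j)).factorial)) *
              G₁ i * G₂ j * (x + y) ^ (n - (k₁ * i + k₂ * j))
          else 0 := by
        rw [← ghAux_key G₁ G₂ k₁ k₂ n hk₁ hk₂ x y]
        refine Finset.sum_congr rfl ?_
        intro s _
        rw [hL s x, hR (n - s) y]
    _ = ∑ i ∈ Finset.range (n + 1), ∑ j ∈ Finset.range (n + 1),
          if k₂ * i + k₁ * j ≤ n then
            ((n.factorial : ℝ) /
                (i.factorial * j.factorial * (n - (k₂ * i + k₁ * j)).factorial)) *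
              G₂ i * G₁ j * (x + y) ^ (n - (k₂ * i + k₁ * j))
          else 0 := by
        rw [Finset.sum_comm]
        refine Finset.sum_congr rfl ?_
        intro i _
        refine Finset.sum_congr rfl ?_
        intro j _
        by_cases h : k₁ * j + k₂ * i ≤ n
        · have h' : k₂ * i + k₁ * j ≤ n := by omega
          have e : k₁ * j + k₂ * i = k₂ * i + k₁ * j := by omega
          rw [if_pos h, if_pos h', e]
          ring
        · have h' : ¬ k₂ * i + k₁ * j ≤ n := by omega
          rw [if_neg h, if_neg h']
    _ = ∑ i ∈ Finset.range (n + 1),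
          (n.choose i : ℝ) * ghAppell a b k₂ m i x * ghAppell a b k₁ m (n - i) y := by
        rw [← ghAux_key G₂ G₁ k₂ k₁ n hk₂ hk₁ x y]
        refine Finset.sum_congr rfl ?_
        intro s _
        rw [hR s x, hL (n - s) y]
end

section
/- Composite differentiation rule: let f be a real polynomial and let A_n^{(k)}(m, f) denote the polynomial composition of A_n^{(k)}(m, ·) with f. Then for every n ≥ 1, (d/dx) A_n^{(k)}(m, f(x)) = n · f′(x) · A_{n−1}^{(k)}(m, f(x)) as an identity of polynomials in x. -/
open Finset Polynomial

/-- Appell property: `(A_n)' = n · A_{n-1}`. -/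
theorem ghAppellPoly_derivative {p q : ℕ} (a : Fin p → ℝ) (b : Fin q → ℝ)
    (k : ℕ) (hk : 1 ≤ k) (m : ℝ) (n : ℕ) (hn : 1 ≤ n) :
    Polynomial.derivative (ghAppellPoly a b k m n) =
      Polynomial.C (n : ℝ) * ghAppellPoly a b k m (n - 1) := by
  unfold ghAppellPoly
  rw [map_sum, Finset.mul_sum]
  rw [← Finset.sum_subset (Finset.range_subset_range.2
      (Nat.add_le_add_right (Nat.div_le_div_right (Nat.sub_le n 1)) 1))]
  · apply Finset.sum_congr rfl
    intro i hi
    rw [Finset.mem_range] at hi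
    have hki : k * i ≤ n - 1 := by
      calc k * i ≤ k * ((n-1)/k) := Nat.mul_le_mul_left k (Nat.lt_succ_iff.mp hi)
        _ ≤ n - 1 := Nat.mul_div_le _ _
    have hki' : k * i + 1 ≤ n := by omega
    rw [derivative_C_mul, derivative_X_pow]
    have he : n - k * i - 1 = n - 1 - k * i := by omega
    rw [he, ← mul_assoc, ← C_mul, ← mul_assoc, ← C_mul]
    congr 2
    have hfac : ((n - k * i).factorial : ℝ) =
        (n - k * i : ℕ) * ((n - 1 - k * i).factorial : ℝ) := by
      have : n - k * i = (n - 1 - k * i) + 1 := by omega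
      rw [this, Nat.factorial_succ]
      push_cast
      ring_nf
    have hnfac : ((n : ℕ).factorial : ℝ) = (n : ℝ) * ((n-1).factorial : ℝ) := by
      have : n = (n - 1) + 1 := by omega
      rw [this, Nat.factorial_succ]
      push_cast
      congr 2
    have h1 : ((n - k * i : ℕ) : ℝ) ≠ 0 := by
      simp only [ne_eq, Nat.cast_eq_zero]; omega
    have h2 : ((i.factorial : ℝ)) ≠ 0 := Nat.cast_ne_zero.2 i.factorial_ne_zero
    have h3 : (((n - 1 - k * i).factorial : ℝ)) ≠ 0 := Nat.cast_ne_zero.2 (Nat.factorial_ne_zero _)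
    rw [hfac, hnfac]
    field_simp
  · intro i hi hni
    rw [Finset.mem_range] at hi hni
    have : n - k * i = 0 := by
      have h1 : (n-1)/k + 1 ≤ i := by omega
      have : k * ((n-1)/k + 1) ≤ k * i := Nat.mul_le_mul_left k h1
      have h2 : n - 1 < k * ((n-1)/k + 1) := Nat.lt_mul_div_succ _ (by omega)
      omega
    rw [this]
    simp

/-- composite differentiation rule: for a real polynomial `f` and `n ≥ 1`,
`(A_n^{(k)}(m, f))' = n · f' · A_{n−1}^{(k)}(m, f)` as polynomials. -/
theorem ghAppellPoly_comp_derivative {p q : ℕ} (a : Fin p → ℝ) (b : Fin q → ℝ)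
    (hb : ∀ s : Fin q, ∀ j : ℕ, b s ≠ -(j : ℝ))
    (k : ℕ) (hk : 1 ≤ k) (m : ℝ) (n : ℕ) (hn : 1 ≤ n) (f : Polynomial ℝ) :
    Polynomial.derivative ((ghAppellPoly a b k m n).comp f) =
      Polynomial.C (n : ℝ) * Polynomial.derivative f *
        (ghAppellPoly a b k m (n - 1)).comp f := by
  rw [Polynomial.derivative_comp, ghAppellPoly_derivative a b k hk m n hn,
    Polynomial.mul_comp, Polynomial.C_comp]
  ring
end

section
/- Gould–Hopper special case: let p = q = 0 (so that γ_i = 1 for all i), let h be a real number, and set m = (−1)^k · h · k^k. Then for every n ∈ ℕ, A_n^{(k)}(m, x) equals the Gould–Hopper polynomial g_n^k(x,h) = ∑_{i=0}^{⌊n/k⌋} (n!/(i!(n−ki)!)) · h^i · x^{n−ki}, and for every real x the formal power series identity exp(xt + h t^k) = ∑_{n=0}^∞ g_n^k(x,h) · t^n/n! holds in ℝ[[t]], where exp(xt + h t^k) denotes the formal exponential of the polynomial x·t + h·t^k. -/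
/-!
By the binomial theorem, `(h t^k + x t)^j / j!` is the sum of `h^i x^l t^(k i + l) / (i! l!)` over
`i + l = j`, so the coefficient of `t^n` in `exp (x t + h t^k)` collects the pairs with
`k i + l = n`, i.e. `l = n - k i`; this is `g_n^k(x,h) / n!`. For `p = q = 0` all `γ_i` are empty
quotients equal to `1`, and the choice `m = (-1)^k h k^k` makes the factor
`(-1)^(k i) m^i / k^(k i)` collapse to `h^i`.
-/
open Finset

/-- The Gould–Hopper polynomial `g_n^k(x,h) = ∑_{i=0}^{⌊n/k⌋} (n!/(i!(n−ki)!)) h^i x^{n−ki}`. -/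
noncomputable def gouldHopper (k : ℕ) (h : ℝ) (n : ℕ) (x : ℝ) : ℝ :=
  ∑ i ∈ Finset.range (n / k + 1),
    ((n.factorial : ℝ) / (i.factorial * (n - k * i).factorial)) * h ^ i * x ^ (n - k * i)

/-- The formal exponential of a power series `f` with zero constant term:
the `n`-th coefficient of `exp f` is `∑_{j=0}^{n} (coeff n (f^j))/j!`. -/
noncomputable def expPS (f : PowerSeries ℝ) : PowerSeries ℝ :=
  PowerSeries.mk fun n =>
    ∑ j ∈ Finset.range (n + 1), PowerSeries.coeff n (f ^ j) / j.factorial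

open PowerSeries Nat

theorem coeff_pow_C_mul_X_pow_add_C_mul_X {R : Type*} [CommSemiring R] (a b : R) (k j n : ℕ) :
    coeff n ((C b * X ^ k + C a * X) ^ j) =
      ∑ p ∈ antidiagonal j,
        if k * p.1 + p.2 = n then j.choose p.1 * b ^ p.1 * a ^ p.2 else 0 := by
  rw [(Commute.all _ _).add_pow', map_sum]
  refine sum_congr rfl fun p _ => ?_
  rw [map_nsmul, mul_pow, mul_pow, ← pow_mul, ← map_pow, ← map_pow, mul_mul_mul_comm,
    ← map_mul, ← pow_add, coeff_C_mul_X_pow, nsmul_eq_mul, mul_ite, mul_zero, ← mul_assoc]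
  exact if_congr eq_comm rfl rfl

theorem neg_one_pow_mul_pow_div (c h : ℝ) (hc : c ≠ 0) (k i : ℕ) :
    (-1) ^ (k * i) * ((-1) ^ k * h * c ^ k) ^ i / c ^ (k * i) = h ^ i := by
  rw [mul_pow, mul_pow, ← pow_mul, ← pow_mul]
  field_simp
  rw [pow_right_comm, neg_one_sq, one_pow, one_mul]

/-- For `k ≥ 1`, `k * i + l = n` forces `i + l ≤ n`, so the surviving pairs are exactly
`(i, n - k * i)` with `k * i ≤ n`. -/
theorem sum_range_sum_antidiagonal_ite_mul_add {M : Type*} [AddCommMonoid M] {k : ℕ}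
    (hk : 1 ≤ k) (n : ℕ) (G : ℕ × ℕ → M) :
    ∑ j ∈ range (n + 1), ∑ p ∈ antidiagonal j, (if k * p.1 + p.2 = n then G p else 0) =
      ∑ i ∈ range (n / k + 1), G (i, n - k * i) := by
  rw [sum_sigma', ← sum_filter]
  have hdiv : ∀ i, i < n / k + 1 ↔ k * i ≤ n := fun i => by
    rw [Nat.lt_succ_iff, Nat.le_div_iff_mul_le hk, mul_comm]
  have hle : ∀ i, i ≤ k * i := fun i => Nat.le_mul_of_pos_left i hk
  refine sum_nbij' (fun q => q.2.1) (fun i => ⟨i + (n - k * i), (i, n - k * i)⟩) ?_ ?_ ?_ ?_ ?_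
  all_goals
    simp only [mem_filter, mem_sigma, mem_range, HasAntidiagonal.mem_antidiagonal, hdiv]
  · rintro ⟨j, i, l⟩ ⟨-, h⟩; dsimp only at h ⊢; omega
  · intro i hi; have := hle i; simp only [and_true]; omega
  · rintro ⟨j, i, l⟩ ⟨⟨-, hj⟩, h⟩; dsimp only at hj h ⊢; subst hj h; simp
  · simp
  · rintro ⟨j, i, l⟩ ⟨-, rfl⟩; simp

theorem ghGamma_fin_zero (a b : Fin 0 → ℝ) (i : ℕ) : ghGamma a b i = 1 := by
  simp [ghGamma]

theorem gouldHopper_div_factorial (k : ℕ) (h : ℝ) (n : ℕ) (x : ℝ) :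
    gouldHopper k h n x / n ! =
      ∑ i ∈ range (n / k + 1), h ^ i * x ^ (n - k * i) / (i ! * (n - k * i)!) := by
  rw [gouldHopper, sum_div]
  refine sum_congr rfl fun i _ => ?_
  field_simp

theorem coeff_expPS_C_mul_X_add_C_mul_X_pow {k : ℕ} (hk : 1 ≤ k) (x h : ℝ) (n : ℕ) :
    coeff n (expPS (C x * X + C h * X ^ k)) =
      ∑ i ∈ range (n / k + 1), h ^ i * x ^ (n - k * i) / (i ! * (n - k * i)!) := by
  rw [expPS, coeff_mk, add_comm (C x * X)]
  simp_rw [coeff_pow_C_mul_X_pow_add_C_mul_X, sum_div, ite_div, zero_div]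
  refine (sum_congr rfl fun j _ => sum_congr rfl fun p hp => ?_).trans
    (sum_range_sum_antidiagonal_ite_mul_add hk n fun p => h ^ p.1 * x ^ p.2 / (p.1 ! * p.2 !))
  rw [HasAntidiagonal.mem_antidiagonal] at hp
  subst hp
  rw [Nat.cast_add_choose]
  congr 1
  field_simp

/-- Gould–Hopper special case: with `p = q = 0` and `m = (−1)^k h k^k`,
`A_n^{(k)}(m,x) = g_n^k(x,h)`, and `exp(xt + h t^k) = ∑_n g_n^k(x,h) t^n/n!` in `ℝ[[t]]`. -/
theorem ghAppell_gouldHopper (k : ℕ) (hk : 1 ≤ k) (h : ℝ) :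
    (∀ (n : ℕ) (x : ℝ),
        ghAppell (Fin.elim0 : Fin 0 → ℝ) (Fin.elim0 : Fin 0 → ℝ) k
            ((-1) ^ k * h * (k : ℝ) ^ k) n x = gouldHopper k h n x) ∧
      ∀ x : ℝ,
        expPS (PowerSeries.C x * PowerSeries.X + PowerSeries.C h * PowerSeries.X ^ k) =
          PowerSeries.mk fun n => gouldHopper k h n x / n.factorial := by
  have hk0 : (k : ℝ) ≠ 0 := by exact_mod_cast Nat.one_le_iff_ne_zero.mp hk
  refine ⟨fun n x => ?_, fun x => ?_⟩
  · simp only [ghAppell, gouldHopper, ghGamma_fin_zero, mul_one, neg_one_pow_mul_pow_div _ _ hk0]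
  · ext n
    rw [coeff_expPS_C_mul_X_add_C_mul_X_pow hk, coeff_mk, gouldHopper_div_factorial]
end
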